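/- Let X and Y be finite simple graphs, each on n ≥ 6 vertices, with δ(X) > n/2, δ(Y) > n/2, δ(X) ≤ δ(Y), and 2δ(X) + 3δ(Y) ≥ 3n. Let σ : V(X) → V(Y) be a bijection and let u, v ∈ V(Y) be such that u′ = σ⁻¹(u) and v′ = σ⁻¹(v) are adjacent in X; suppose u and v are not (X,Y)-exchangeable from σ. Let w, x ∈ V(Y) satisfy: w ∈ N(u) ∩ N(v), w ∉ σ(N(u′)) ∪ σ(N(v′)), x ∈ σ(N(u′)) ∩ σ(N(v′)), and w adjacent to x in Y; write w′ = σ⁻¹(w), x′ = σ⁻¹(x), P = N(x′) ∩ N(w′), and R = N[w′] ∩ σ⁻¹(N[w]). Then every vertex of σ(P) has at most one neighbor (in Y) in σ(R). -/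

import Mathlib

/-!
Think of `σ` as placing the token `σ a` on the vertex `a` of `X`. If some `p ∈ σ(P)` had two
`Y`-neighbours `y₁ ≠ y₂` in `σ(R)`, then `u` and `v` would be exchangeable. Indeed `u′`, `v′`, `x′`
form a triangle in `X` and `w` is a `Y`-neighbour of both `u` and `v`, so once the token `w` sits
on `x′` the three moves `(u w)`, `(w v)`, `(w u)` exchange `u` and `v`. A move not involving `u`
and `v` may be made first and undone afterwards, so it suffices to bring `w` onto `x′` by such
moves: directly if `w′x′ ∈ E(X)`, through `p′` if `pw ∈ E(Y)`, and otherwise after using `y₁` and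
`y₂` to place a `Y`-neighbour of `w` on `p′`.
-/

open SimpleGraph

/-- The friends-and-strangers graph `FS X Y` of two graphs `X`, `Y`: vertices are the
bijections from `V(X)` to `V(Y)`, and `σ`, `τ` are adjacent iff they agree everywhere except
at two vertices `a`, `b` adjacent in `X` whose images under `σ` are adjacent in `Y`,
with `τ a = σ b` and `τ b = σ a`. -/
def FS {V W : Type*} (X : SimpleGraph V) (Y : SimpleGraph W) :
    SimpleGraph (V ≃ W) where
  Adj σ τ := ∃ a b : V, X.Adj a b ∧ Y.Adj (σ a) (σ b) ∧
      τ a = σ b ∧ τ b = σ a ∧ ∀ w : V, w ≠ a → w ≠ b → τ w = σ w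
  symm := by
    constructor
    rintro σ τ ⟨a, b, hX, hY, h1, h2, h3⟩
    exact ⟨a, b, hX, by rw [h1, h2]; exact hY.symm, h2.symm, h1.symm,
      fun w hwa hwb => (h3 w hwa hwb).symm⟩
  loopless := by
    constructor
    rintro σ ⟨a, b, hX, _, h1, _, _⟩
    exact hX.ne (σ.injective h1)

/-- The minimum degree of a graph (stated via `Set.ncard`, so that no decidability
assumptions are required). -/
noncomputable def minDeg {V : Type*} (G : SimpleGraph V) : ℕ :=
  ⨅ v : V, (G.neighborSet v).ncard

/-- Vertices `u`, `v` of `Y` are `(X,Y)`-exchangeable from `σ` if `σ` and `(u v) ∘ σ`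
lie in the same connected component of `FS X Y`. -/
def Exchangeable {V W : Type*} (X : SimpleGraph V) (Y : SimpleGraph W)
    (σ : V ≃ W) (u v : W) : Prop :=
  letI := Classical.decEq W
  (FS X Y).Reachable σ (σ.trans (Equiv.swap u v))

theorem Equiv.swap_trans_swap_comm {α : Type*} [DecidableEq α] {a b c d : α}
    (hac : a ≠ c) (had : a ≠ d) (hbc : b ≠ c) (hbd : b ≠ d) :
    (Equiv.swap a b).trans (Equiv.swap c d) = (Equiv.swap c d).trans (Equiv.swap a b) := by
  ext z
  grind

theorem Equiv.swap_trans_swap_trans_swap {α : Type*} [DecidableEq α] {a b c : α}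
    (hab : a ≠ b) (hbc : b ≠ c) :
    (Equiv.swap a c).trans ((Equiv.swap c b).trans (Equiv.swap c a)) = Equiv.swap a b := by
  ext z
  grind

section

variable {V W : Type*} [DecidableEq W] {X : SimpleGraph V} {Y : SimpleGraph W}

theorem exchangeable_iff_reachable {σ : V ≃ W} {u v : W} :
    Exchangeable X Y σ u v ↔ (FS X Y).Reachable σ (σ.trans (Equiv.swap u v)) := by
  unfold Exchangeable
  convert Iff.rfl

theorem FS.adj_trans_swap {σ : V ≃ W} {s t : W} (hX : X.Adj (σ.symm s) (σ.symm t))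
    (hY : Y.Adj s t) : (FS X Y).Adj σ (σ.trans (Equiv.swap s t)) := by
  refine ⟨σ.symm s, σ.symm t, hX, by simpa using hY, by simp, by simp, fun z hzs hzt => ?_⟩
  refine Equiv.swap_apply_of_ne_of_ne ?_ ?_ <;> rintro rfl <;> simp_all

/-- A move of two tokens other than `u` and `v` commutes with the transposition `(u v)`, so it
can be performed before exchanging `u` and `v` and undone afterwards. -/
theorem Exchangeable.of_trans_swap {σ : V ≃ W} {u v s t : W}
    (hX : X.Adj (σ.symm s) (σ.symm t)) (hY : Y.Adj s t)
    (hsu : s ≠ u) (hsv : s ≠ v) (htu : t ≠ u) (htv : t ≠ v)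
    (h : Exchangeable X Y (σ.trans (Equiv.swap s t)) u v) : Exchangeable X Y σ u v := by
  rw [exchangeable_iff_reachable] at h ⊢
  have hX' : X.Adj ((σ.trans (Equiv.swap u v)).symm s) ((σ.trans (Equiv.swap u v)).symm t) := by
    simpa [Equiv.swap_apply_of_ne_of_ne, hsu, hsv, htu, htv] using hX
  have hcomm : (σ.trans (Equiv.swap s t)).trans (Equiv.swap u v)
      = (σ.trans (Equiv.swap u v)).trans (Equiv.swap s t) := by
    simp only [Equiv.trans_assoc, Equiv.swap_trans_swap_comm hsu hsv htu htv]
  refine (FS.adj_trans_swap hX hY).reachable.trans (h.trans ?_)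
  rw [hcomm]
  exact (FS.adj_trans_swap hX' hY).reachable.symm

theorem exchangeable_of_triangle {σ : V ≃ W} {u v t : W}
    (huv : X.Adj (σ.symm u) (σ.symm v)) (hut : X.Adj (σ.symm u) (σ.symm t))
    (hvt : X.Adj (σ.symm v) (σ.symm t)) (hYu : Y.Adj u t) (hYv : Y.Adj v t) :
    Exchangeable X Y σ u v := by
  rw [exchangeable_iff_reachable, ← Equiv.swap_trans_swap_trans_swap (ne_of_apply_ne σ.symm huv.ne) hYv.ne]
  simp only [← Equiv.trans_assoc]
  refine (FS.adj_trans_swap hut hYu).reachable.trans <|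
    (FS.adj_trans_swap ?_ hYv.symm).reachable.trans (FS.adj_trans_swap ?_ hYu.symm).reachable
  all_goals grind [Equiv.symm_trans_apply, Equiv.symm_swap, SimpleGraph.irrefl, SimpleGraph.adj_comm]

theorem exchangeable_of_adj_positions {σ : V ≃ W} {u v w x : W}
    (huv : X.Adj (σ.symm u) (σ.symm v)) (hxu : X.Adj (σ.symm u) (σ.symm x))
    (hxv : X.Adj (σ.symm v) (σ.symm x)) (hwu : Y.Adj u w) (hwv : Y.Adj v w)
    (hwx : Y.Adj w x) (hwx' : X.Adj (σ.symm w) (σ.symm x)) :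
    Exchangeable X Y σ u v := by
  have hxu' : x ≠ u := ne_of_apply_ne σ.symm hxu.ne'
  have hxv' : x ≠ v := ne_of_apply_ne σ.symm hxv.ne'
  refine Exchangeable.of_trans_swap hwx' hwx hwu.ne' hwv.ne' hxu' hxv' ?_
  refine exchangeable_of_triangle (t := w) ?_ ?_ ?_ hwu hwv
  all_goals grind [Equiv.symm_trans_apply, Equiv.symm_swap, SimpleGraph.irrefl, SimpleGraph.adj_comm]

theorem exchangeable_of_path_positions {σ : V ≃ W} {u v w x p : W}
    (huv : X.Adj (σ.symm u) (σ.symm v)) (hxu : X.Adj (σ.symm u) (σ.symm x))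
    (hxv : X.Adj (σ.symm v) (σ.symm x)) (hwu : Y.Adj u w) (hwv : Y.Adj v w)
    (hwx : Y.Adj w x) (hwu' : ¬ X.Adj (σ.symm u) (σ.symm w))
    (hwv' : ¬ X.Adj (σ.symm v) (σ.symm w)) (hpw : X.Adj (σ.symm w) (σ.symm p))
    (hpx : X.Adj (σ.symm p) (σ.symm x)) (hYpw : Y.Adj p w) :
    Exchangeable X Y σ u v := by
  have hpu : p ≠ u := fun e => hwu' (e ▸ hpw.symm)
  have hpv : p ≠ v := fun e => hwv' (e ▸ hpw.symm)
  refine Exchangeable.of_trans_swap hpw hYpw.symm hwu.ne' hwv.ne' hpu hpv ?_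
  refine exchangeable_of_adj_positions (w := w) (x := x) ?_ ?_ ?_ hwu hwv hwx ?_
  all_goals grind [Equiv.symm_trans_apply, Equiv.symm_swap, SimpleGraph.irrefl, SimpleGraph.adj_comm]

/-- The four moves `(w y₂)`, `(y₂ p)`, `(p y₁)`, `(y₁ w)` bring `w` back to its position and `y₂`,
a `Y`-neighbour of `w`, to the position of `p`. -/
theorem exchangeable_of_two_helpers {σ : V ≃ W} {u v w x p y₁ y₂ : W}
    (huv : X.Adj (σ.symm u) (σ.symm v)) (hxu : X.Adj (σ.symm u) (σ.symm x))
    (hxv : X.Adj (σ.symm v) (σ.symm x)) (hwu : Y.Adj u w) (hwv : Y.Adj v w)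
    (hwx : Y.Adj w x) (hwu' : ¬ X.Adj (σ.symm u) (σ.symm w))
    (hwv' : ¬ X.Adj (σ.symm v) (σ.symm w)) (hwx' : ¬ X.Adj (σ.symm w) (σ.symm x))
    (hpw : X.Adj (σ.symm w) (σ.symm p)) (hpx : X.Adj (σ.symm p) (σ.symm x))
    (hy : y₁ ≠ y₂) (hy₁ : X.Adj (σ.symm w) (σ.symm y₁)) (hy₂ : X.Adj (σ.symm w) (σ.symm y₂))
    (hwy₁ : Y.Adj w y₁) (hwy₂ : Y.Adj w y₂) (hpy₁ : Y.Adj p y₁) (hpy₂ : Y.Adj p y₂) :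
    Exchangeable X Y σ u v := by
  have hpu : p ≠ u := fun e => hwu' (e ▸ hpw.symm)
  have hpv : p ≠ v := fun e => hwv' (e ▸ hpw.symm)
  have hy₁u : y₁ ≠ u := fun e => hwu' (e ▸ hy₁.symm)
  have hy₁v : y₁ ≠ v := fun e => hwv' (e ▸ hy₁.symm)
  have hy₂u : y₂ ≠ u := fun e => hwu' (e ▸ hy₂.symm)
  have hy₂v : y₂ ≠ v := fun e => hwv' (e ▸ hy₂.symm)
  refine Exchangeable.of_trans_swap hy₂ hwy₂ hwu.ne' hwv.ne' hy₂u hy₂v ?_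
  refine Exchangeable.of_trans_swap (s := y₂) (t := p) ?_ hpy₂.symm hy₂u hy₂v hpu hpv ?_
  · grind [Equiv.symm_trans_apply, Equiv.symm_swap, SimpleGraph.irrefl, SimpleGraph.adj_comm]
  refine Exchangeable.of_trans_swap (s := p) (t := y₁) ?_ hpy₁ hpu hpv hy₁u hy₁v ?_
  · grind [Equiv.symm_trans_apply, Equiv.symm_swap, SimpleGraph.irrefl, SimpleGraph.adj_comm]
  refine Exchangeable.of_trans_swap (s := y₁) (t := w) ?_ hwy₁.symm hy₁u hy₁v hwu.ne' hwv.ne' ?_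
  · grind [Equiv.symm_trans_apply, Equiv.symm_swap, SimpleGraph.irrefl, SimpleGraph.adj_comm]
  refine exchangeable_of_path_positions (w := w) (x := x) (p := y₂) ?_ ?_ ?_ hwu hwv hwx ?_ ?_
    ?_ ?_ hwy₂.symm
  all_goals grind [Equiv.symm_trans_apply, Equiv.symm_swap, SimpleGraph.irrefl, SimpleGraph.adj_comm]

end

theorem statement17_general {V W : Type*}
    (X : SimpleGraph V) (Y : SimpleGraph W)
    (σ : V ≃ W) (u v : W)
    (hadj : X.Adj (σ.symm u) (σ.symm v))
    (hnex : ¬ Exchangeable X Y σ u v) (w x : W)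
    (hw : w ∈ Y.neighborSet u ∩ Y.neighborSet v)
    (hwn : w ∉ (⇑σ '' X.neighborSet (σ.symm u)) ∪ (⇑σ '' X.neighborSet (σ.symm v)))
    (hx : x ∈ (⇑σ '' X.neighborSet (σ.symm u)) ∩ (⇑σ '' X.neighborSet (σ.symm v)))
    (hwx : Y.Adj w x) :
    ∀ p ∈ ⇑σ '' (X.neighborSet (σ.symm x) ∩ X.neighborSet (σ.symm w)),
      (Y.neighborSet p ∩
        (⇑σ '' ((insert (σ.symm w) (X.neighborSet (σ.symm w))) ∩
          (⇑σ ⁻¹' (insert w (Y.neighborSet w)))))).ncard ≤ 1 := by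
  classical
  simp only [Equiv.image_eq_preimage_symm, Set.mem_inter_iff, Set.mem_union, Set.mem_preimage,
    mem_neighborSet, not_or] at hw hwn hx ⊢
  intro p ⟨hpx, hpw⟩
  suffices hsub : (Y.neighborSet p ∩ _).Subsingleton from (Set.ncard_le_one hsub.finite).2 hsub
  rintro y₁ ⟨hpy₁, hy₁⟩ y₂ ⟨hpy₂, hy₂⟩
  simp only [Set.mem_inter_iff, Set.mem_preimage, Set.mem_insert_iff, mem_neighborSet,
    EmbeddingLike.apply_eq_iff_eq, Equiv.apply_symm_apply] at hy₁ hy₂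
  by_contra hy
  apply hnex
  by_cases hwx' : X.Adj (σ.symm w) (σ.symm x)
  · exact exchangeable_of_adj_positions hadj hx.1 hx.2 hw.1 hw.2 hwx hwx'
  by_cases hYpw : Y.Adj p w
  · exact exchangeable_of_path_positions hadj hx.1 hx.2 hw.1 hw.2 hwx hwn.1 hwn.2 hpw hpx.symm hYpw
  have hR : ∀ y, Y.Adj p y → (y = w ∨ X.Adj (σ.symm w) (σ.symm y)) ∧ (y = w ∨ Y.Adj w y) →
      X.Adj (σ.symm w) (σ.symm y) ∧ Y.Adj w y := fun y hpy hy =>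
    have hyw : y ≠ w := fun e => hYpw (e ▸ hpy)
    ⟨hy.1.resolve_left hyw, hy.2.resolve_left hyw⟩
  obtain ⟨hXwy₁, hYwy₁⟩ := hR y₁ hpy₁ hy₁
  obtain ⟨hXwy₂, hYwy₂⟩ := hR y₂ hpy₂ hy₂
  exact exchangeable_of_two_helpers hadj hx.1 hx.2 hw.1 hw.2 hwx hwn.1 hwn.2 hwx' hpw hpx.symm hy
    hXwy₁ hXwy₂ hYwy₁ hYwy₂ hpy₁ hpy₂

theorem statement17 {V W : Type*} [Fintype V] [Fintype W] (n : ℕ)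
    (X : SimpleGraph V) (Y : SimpleGraph W)
    (hV : Fintype.card V = n) (hW : Fintype.card W = n) (hn : 6 ≤ n)
    (hdX : 2 * minDeg X > n) (hdY : 2 * minDeg Y > n)
    (hle : minDeg X ≤ minDeg Y)
    (hdeg : 2 * minDeg X + 3 * minDeg Y ≥ 3 * n)
    (σ : V ≃ W) (u v : W)
    (hadj : X.Adj (σ.symm u) (σ.symm v))
    (hnex : ¬ Exchangeable X Y σ u v) (w x : W)
    (hw : w ∈ Y.neighborSet u ∩ Y.neighborSet v)
    (hwn : w ∉ (⇑σ '' X.neighborSet (σ.symm u)) ∪ (⇑σ '' X.neighborSet (σ.symm v)))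
    (hx : x ∈ (⇑σ '' X.neighborSet (σ.symm u)) ∩ (⇑σ '' X.neighborSet (σ.symm v)))
    (hwx : Y.Adj w x) :
    ∀ p ∈ ⇑σ '' (X.neighborSet (σ.symm x) ∩ X.neighborSet (σ.symm w)),
      (Y.neighborSet p ∩
        (⇑σ '' ((insert (σ.symm w) (X.neighborSet (σ.symm w))) ∩
          (⇑σ ⁻¹' (insert w (Y.neighborSet w)))))).ncard ≤ 1 :=
  statement17_general X Y σ u v hadj hnex w x hw hwn hx hwx
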